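/- Let γ : [0,T] → ℝ³ be absolutely continuous with |γ'(s)| = 1 for a.e. s ∈ [0,T], and let ω ∈ L²([0,T];ℝ³). Define the rotated curve γ_ω(s) = γ(s) + ∫₀^s ω(σ) × (γ(s) − γ(σ)) dσ. Then for a.e. s ∈ [0,T] one has |γ_ω'(s)|² = 1 + | ( ∫₀^s ω(σ) dσ ) × γ'(s) |². In particular |γ_ω'(s)|² ≤ 1 + ‖ω‖²_{L¹([0,s])}. -/

import Mathlib

/-!
On `[0,T]` the rotated curve is `γ_ω = γ + W × γ - ∫₀^· ω × γ` with `W(s) = ∫₀^s ω`. By the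
Lebesgue differentiation theorem all three terms are differentiable at almost every `s`, and in the
product rule the two terms `ω(s) × γ(s)` cancel, leaving `γ_ω'(s) = γ'(s) + W(s) × γ'(s)`. Since
`W(s) × γ'(s) ⟂ γ'(s)` and `|γ'(s)| = 1`, Pythagoras gives the identity, and
`|W(s) × γ'(s)| ≤ |W(s)| ≤ ∫₀^s |ω|` the bound.
-/

open MeasureTheory Set Classical
noncomputable section

/-- Three-dimensional Euclidean space. -/
abbrev E3 : Type := EuclideanSpace ℝ (Fin 3)

/-- The cross product on `ℝ³`. -/
def cross (u v : E3) : E3 :=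
  WithLp.toLp 2 ![u 1 * v 2 - u 2 * v 1, u 2 * v 0 - u 0 * v 2, u 0 * v 1 - u 1 * v 0]

/-- The Euclidean inner product on `ℝ³`. -/
def rinner (u v : E3) : ℝ := inner ℝ u v

/-- The signed distance to the boundary of `Ω`: negative inside `Ω`, positive outside. -/
def signedDist' (Ω : Set E3) (x : E3) : ℝ :=
  if x ∈ Ω then -(Metric.infDist x (frontier Ω)) else Metric.infDist x (frontier Ω)

/-- The (unit) outer normal to `Ω`, i.e. the gradient of the signed distance. -/
def outerNormal (Ω : Set E3) (x : E3) : E3 := gradient (signedDist' Ω) x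

/-- The set `Ω` has boundary of class `C^k`: near every boundary point, `Ω` is the sublevel
set of a `C^k` defining function with nonvanishing gradient. -/
def HasCkBoundary (Ω : Set E3) (k : ℕ∞) : Prop :=
  ∀ x ∈ frontier Ω, ∃ (U : Set E3) (f : E3 → ℝ), IsOpen U ∧ x ∈ U ∧
    ContDiffOn ℝ k f U ∧ (∀ y ∈ U, gradient f y ≠ 0) ∧
    Ω ∩ U = {y ∈ U | f y < 0} ∧ frontier Ω ∩ U = {y ∈ U | f y = 0}

/-- `γ`, together with its derivative `γd` and second derivative `γdd`, is a curve of Sobolev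
class `H²` on `[0,T]`: `γ` and `γd` are absolutely continuous with the stated derivatives,
and `γdd` is square integrable. -/
def IsH2Curve (T : ℝ) (γ γd γdd : ℝ → E3) : Prop :=
  (∀ s ∈ Icc (0:ℝ) T, γ s = γ 0 + ∫ σ in (0:ℝ)..s, γd σ) ∧
  (∀ s ∈ Icc (0:ℝ) T, γd s = γd 0 + ∫ σ in (0:ℝ)..s, γdd σ) ∧
  MemLp γdd 2 (volume.restrict (Icc (0:ℝ) T))

/-- The `L²` norm of `ω` on `[0,T]`. -/
def L2norm (T : ℝ) (ω : ℝ → E3) : ℝ := Real.sqrt (∫ s in (0:ℝ)..T, ‖ω s‖ ^ 2)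

/-- The `H²` norm of a curve on `[0,T]` (given together with its two derivatives). -/
def H2norm (T : ℝ) (v vd vdd : ℝ → E3) : ℝ :=
  Real.sqrt ((∫ s in (0:ℝ)..T, ‖v s‖ ^ 2) + (∫ s in (0:ℝ)..T, ‖vd s‖ ^ 2) +
    (∫ s in (0:ℝ)..T, ‖vdd s‖ ^ 2))

/-- Membership in the tube `V_ρ` around the (extended) initial curve `γ₀`:
`γ(0) = 0`, `γ'(0) = γ₀'(0)`, `|γ'| ≡ 1` on `[0,T]`, and `∫₀^T |γ'' − γ₀''|² ≤ ρ`. -/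
def InTube (T ρ : ℝ) (γ₀d0 : E3) (γ₀dd : ℝ → E3) (γ γd γdd : ℝ → E3) : Prop :=
  IsH2Curve T γ γd γdd ∧ γ 0 = 0 ∧ γd 0 = γ₀d0 ∧
  (∀ s ∈ Icc (0:ℝ) T, ‖γd s‖ = 1) ∧
  (∫ s in (0:ℝ)..T, ‖γdd s - γ₀dd s‖ ^ 2) ≤ ρ

/-- The second derivative of the curve `γ₀` extended linearly beyond `t₀`. -/
def extendSecond (t₀ : ℝ) (γ₀dd : ℝ → E3) : ℝ → E3 :=
  fun s => if s ≤ t₀ then γ₀dd s else 0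

/-- The rotated curve `γ_ω(s) = γ(s) + ∫₀^s ω(σ) × (γ(s) − γ(σ)) dσ`. -/
def rotCurve (γ ω : ℝ → E3) (s : ℝ) : E3 :=
  γ s + ∫ σ in (0:ℝ)..s, cross (ω σ) (γ s - γ σ)

/-- The elastic cost `J(ω) = ∫₀^T e^{β(t−s)} |ω(s)|² ds`. -/
def Jcost (β t T : ℝ) (ω : ℝ → E3) : ℝ :=
  ∫ s in (0:ℝ)..T, Real.exp (β * (t - s)) * ‖ω s‖ ^ 2

/-- The maximal depth `E(t,γ,Ω)` at which `γ|_{[0,t]}` penetrates inside `Ω` (zero if it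
does not enter `Ω`). -/
def penDepth (t : ℝ) (γ : ℝ → E3) (Ω : Set E3) : ℝ :=
  sSup (insert 0 {d | ∃ s ∈ Icc (0:ℝ) t, γ s ∈ Ω ∧ d = Metric.infDist (γ s) (frontier Ω)})

/-- The breakdown configuration (B): the tip touches the obstacle perpendicularly, and the
curve is straight (a.e.) wherever it does not touch the boundary. -/
def Breakdown (Ω : Set E3) (t₀ : ℝ) (γ γd γdd : ℝ → E3) : Prop :=
  γ t₀ ∈ frontier Ω ∧ γd t₀ = - outerNormal Ω (γ t₀) ∧
  (∀ᵐ s : ℝ, s ∈ Ioo (0:ℝ) t₀ → γ s ∉ frontier Ω → γdd s = 0)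

/-- The linear map `v ↦ w × v`. -/
def crossLM (w : E3) : E3 →ₗ[ℝ] E3 where
  toFun v := cross w v
  map_add' a b := by
    ext i
    fin_cases i <;> simp [cross, PiLp.add_apply] <;> ring
  map_smul' c a := by
    ext i
    fin_cases i <;> simp [cross, PiLp.smul_apply, smul_eq_mul] <;> ring

/-- The continuous linear map `A(w) : v ↦ w × v`. -/
def crossCLM (w : E3) : E3 →L[ℝ] E3 := LinearMap.toContinuousLinearMap (crossLM w)

/-- The rotation `R[w] = exp(A(w))`, where `A(w)v = w × v`. -/
def rotOf (w : E3) : E3 →L[ℝ] E3 := NormedSpace.exp (crossCLM w)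

section Cross

lemma cross_add_left (u u' v : E3) : cross (u + u') v = cross u v + cross u' v := by
  ext i; fin_cases i <;> simp [cross] <;> ring

lemma cross_smul_left (c : ℝ) (u v : E3) : cross (c • u) v = c • cross u v := by
  ext i; fin_cases i <;> simp [cross] <;> ring

lemma inner_cross_self (w v : E3) : inner ℝ v (cross w v) = 0 := by
  simp [cross, PiLp.inner_apply, Fin.sum_univ_three]
  ring

lemma norm_cross_sq_add_inner_sq (u v : E3) :
    ‖cross u v‖ ^ 2 + inner ℝ u v ^ 2 = ‖u‖ ^ 2 * ‖v‖ ^ 2 := by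
  simp only [EuclideanSpace.norm_sq_eq, Real.norm_eq_abs, sq_abs, PiLp.inner_apply,
    Fin.sum_univ_three]
  simp [cross]
  ring

lemma norm_cross_le (u v : E3) : ‖cross u v‖ ≤ ‖u‖ * ‖v‖ := by
  refine le_of_sq_le_sq ?_ (by positivity)
  nlinarith [norm_cross_sq_add_inner_sq u v, sq_nonneg (inner ℝ u v)]

lemma norm_add_cross_self_sq (w v : E3) : ‖v + cross w v‖ ^ 2 = ‖v‖ ^ 2 + ‖cross w v‖ ^ 2 := by
  simpa [sq] using norm_add_sq_eq_norm_sq_add_norm_sq_real (inner_cross_self w v)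

def crossBilin : E3 →L[ℝ] E3 →L[ℝ] E3 :=
  LinearMap.mkContinuous₂
    (LinearMap.mk₂ ℝ cross cross_add_left cross_smul_left
      (fun u => (crossLM u).map_add) (fun c u => (crossLM u).map_smul c))
    1 (fun u v => by rw [one_mul]; exact norm_cross_le u v)

lemma crossBilin_apply (u v : E3) : crossBilin u v = cross u v := rfl

end Cross

section Primitive

variable {E : Type*} [NormedAddCommGroup E] [NormedSpace ℝ E]

theorem MeasureTheory.IntegrableOn.ae_hasDerivAt_integral_Icc [CompleteSpace E] {f : ℝ → E}
    {a b : ℝ} (hf : IntegrableOn f (Icc a b)) :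
    ∀ᵐ x, x ∈ Icc a b → HasDerivAt (fun x => ∫ t in a..x, f t) (f x) x := by
  rcases le_or_gt a b with hab | hab
  · have h := ((intervalIntegrable_iff_integrableOn_Icc_of_le hab).2 hf).ae_hasDerivAt_integral
    rw [uIcc_of_le hab] at h
    filter_upwards [h] with x hx hxab using hx hxab a ⟨le_rfl, hab⟩
  · simp [Icc_eq_empty_of_lt hab]

variable {γ γd : ℝ → E} {a b : ℝ}

theorem continuousOn_of_eq_integral_Icc (hγ : ∀ s ∈ Icc a b, γ s = γ a + ∫ σ in a..s, γd σ)
    (hγd : IntegrableOn γd (Icc a b)) : ContinuousOn γ (Icc a b) := by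
  rcases le_or_gt a b with hab | hab
  · rw [← uIcc_of_le hab] at hγd ⊢
    refine ((continuousOn_const (c := γ a)).add
      (intervalIntegral.continuousOn_primitive_interval hγd)).congr ?_
    rwa [uIcc_of_le hab]
  · simp [Icc_eq_empty_of_lt hab]

theorem ae_hasDerivAt_of_eq_integral_Icc [CompleteSpace E]
    (hγ : ∀ s ∈ Icc a b, γ s = γ a + ∫ σ in a..s, γd σ)
    (hγd : IntegrableOn γd (Icc a b)) : ∀ᵐ s, s ∈ Icc a b → HasDerivAt γ (γd s) s := by
  filter_upwards [hγd.ae_hasDerivAt_integral_Icc, Ioo_ae_eq_Icc.symm.le] with s hs hs_Ioo hs_Icc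
  obtain ⟨has, hsb⟩ : s ∈ Ioo a b := hs_Ioo hs_Icc
  exact ((hs hs_Icc).const_add (γ a)).congr_of_eventuallyEq
    (Set.EqOn.eventuallyEq_of_mem hγ (Icc_mem_nhds has hsb))

end Primitive

theorem ContinuousLinearMap.intervalIntegral_bilin_sub {E F G : Type*}
    [NormedAddCommGroup E] [NormedSpace ℝ E] [CompleteSpace E] [NormedAddCommGroup F]
    [NormedSpace ℝ F] [NormedAddCommGroup G] [NormedSpace ℝ G] [CompleteSpace G]
    (B : E →L[ℝ] F →L[ℝ] G)
    {f : ℝ → E} {g : ℝ → F} {a b : ℝ} (c : F) (hf : IntervalIntegrable f volume a b)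
    (hfg : IntervalIntegrable (fun σ => B (f σ) (g σ)) volume a b) :
    ∫ σ in a..b, B (f σ) (c - g σ) = B (∫ σ in a..b, f σ) c - ∫ σ in a..b, B (f σ) (g σ) := by
  have hfc : IntervalIntegrable (fun σ => B (f σ) c) volume a b :=
    ⟨(B.flip c).integrable_comp hf.1, (B.flip c).integrable_comp hf.2⟩
  simp_rw [map_sub]
  rw [intervalIntegral.integral_sub hfc hfg]
  congr 1
  exact (B.flip c).intervalIntegral_comp_comm hf

section RotatedCurve

variable {γ ω : ℝ → E3} {T : ℝ}

theorem MeasureTheory.IntegrableOn.cross_of_continuousOn (hω : IntegrableOn ω (Icc 0 T))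
    (hγ : ContinuousOn γ (Icc 0 T)) : IntegrableOn (fun σ => cross (ω σ) (γ σ)) (Icc 0 T) := by
  obtain ⟨C, hC⟩ := isCompact_Icc.exists_bound_of_continuousOn hγ
  exact crossBilin.integrable_of_bilin_of_bdd_right C hω
    (hγ.aestronglyMeasurable measurableSet_Icc) (ae_restrict_of_forall_mem measurableSet_Icc hC)

theorem rotCurve_eqOn_add_cross_sub (hω : IntegrableOn ω (Icc 0 T))
    (hωγ : IntegrableOn (fun σ => cross (ω σ) (γ σ)) (Icc 0 T)) :
    EqOn (rotCurve γ ω) (fun t => γ t + cross (∫ σ in (0:ℝ)..t, ω σ) (γ t) -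
      ∫ σ in (0:ℝ)..t, cross (ω σ) (γ σ)) (Icc 0 T) := by
  intro t ht
  have hII (f : ℝ → E3) (hf : IntegrableOn f (Icc 0 T)) : IntervalIntegrable f volume 0 t :=
    (intervalIntegrable_iff_integrableOn_Icc_of_le ht.1).2
      (hf.mono_set (Icc_subset_Icc_right ht.2))
  have h := crossBilin.intervalIntegral_bilin_sub (γ t) (hII _ hω) (hII _ hωγ)
  simp only [crossBilin_apply] at h
  rw [rotCurve, h]
  exact (add_sub_assoc _ _ _).symm

theorem HasDerivAt.add_cross_sub {W F : ℝ → E3} {v w : E3} {s : ℝ} (hγ : HasDerivAt γ v s)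
    (hW : HasDerivAt W w s) (hF : HasDerivAt F (cross w (γ s)) s) :
    HasDerivAt (fun t => γ t + cross (W t) (γ t) - F t) (v + cross (W s) v) s := by
  have hWγ := crossBilin.hasDerivAt_of_bilinear (fun _ => hW) (fun _ => hγ)
  simp only [crossBilin_apply] at hWγ
  exact ((hγ.add hWγ).sub hF).congr_deriv (by abel)

end RotatedCurve

theorem rotated_curve_derivative_norm_sq_general
    (T : ℝ) (γ γd : ℝ → E3)
    (hγac : ∀ s ∈ Icc (0:ℝ) T, γ s = γ 0 + ∫ σ in (0:ℝ)..s, γd σ)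
    (hγd : IntegrableOn γd (Icc (0:ℝ) T))
    (hunit : ∀ᵐ s : ℝ, s ∈ Icc (0:ℝ) T → ‖γd s‖ = 1)
    (ω : ℝ → E3) (hω : MemLp ω 2 (volume.restrict (Icc (0:ℝ) T))) :
    ∀ᵐ s : ℝ, s ∈ Icc (0:ℝ) T →
      ∃ d : E3, HasDerivAt (rotCurve γ ω) d s ∧
        ‖d‖ ^ 2 = 1 + ‖cross (∫ σ in (0:ℝ)..s, ω σ) (γd s)‖ ^ 2 ∧
        ‖d‖ ^ 2 ≤ 1 + (∫ σ in (0:ℝ)..s, ‖ω σ‖) ^ 2 := by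
  have hωi : IntegrableOn ω (Icc 0 T) := hω.integrable one_le_two
  have hωγ := hωi.cross_of_continuousOn (continuousOn_of_eq_integral_Icc hγac hγd)
  filter_upwards [hunit, ae_hasDerivAt_of_eq_integral_Icc hγac hγd,
    hωi.ae_hasDerivAt_integral_Icc, hωγ.ae_hasDerivAt_integral_Icc, Ioo_ae_eq_Icc.symm.le]
    with s hs_unit hs_γ hs_W hs_F hs_Ioo hs
  obtain ⟨h0s, hsT⟩ : s ∈ Ioo 0 T := hs_Ioo hs
  have hnorm_sq : ‖γd s + cross (∫ σ in (0:ℝ)..s, ω σ) (γd s)‖ ^ 2 =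
      1 + ‖cross (∫ σ in (0:ℝ)..s, ω σ) (γd s)‖ ^ 2 := by
    rw [norm_add_cross_self_sq, hs_unit hs, one_pow]
  refine ⟨_, ?_, hnorm_sq, ?_⟩
  · exact ((hs_γ hs).add_cross_sub (hs_W hs) (hs_F hs)).congr_of_eventuallyEq
      ((rotCurve_eqOn_add_cross_sub hωi hωγ).eventuallyEq_of_mem (Icc_mem_nhds h0s hsT))
  · rw [hnorm_sq]
    gcongr
    calc ‖cross (∫ σ in (0:ℝ)..s, ω σ) (γd s)‖
        ≤ ‖∫ σ in (0:ℝ)..s, ω σ‖ * ‖γd s‖ := norm_cross_le _ _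
      _ = ‖∫ σ in (0:ℝ)..s, ω σ‖ := by rw [hs_unit hs, mul_one]
      _ ≤ ∫ σ in (0:ℝ)..s, ‖ω σ‖ := intervalIntegral.norm_integral_le_integral_norm h0s.le

/-- for a.e. `s`, the rotated curve `γ_ω` is differentiable at `s` and
`|γ_ω'(s)|² = 1 + |(∫₀^s ω) × γ'(s)|² ≤ 1 + ‖ω‖²_{L¹([0,s])}`. -/
theorem rotated_curve_derivative_norm_sq
    (T : ℝ) (hT : 0 < T) (γ γd : ℝ → E3)
    (hγac : ∀ s ∈ Icc (0:ℝ) T, γ s = γ 0 + ∫ σ in (0:ℝ)..s, γd σ)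
    (hγd : IntegrableOn γd (Icc (0:ℝ) T))
    (hunit : ∀ᵐ s : ℝ, s ∈ Icc (0:ℝ) T → ‖γd s‖ = 1)
    (ω : ℝ → E3) (hω : MemLp ω 2 (volume.restrict (Icc (0:ℝ) T))) :
    ∀ᵐ s : ℝ, s ∈ Icc (0:ℝ) T →
      ∃ d : E3, HasDerivAt (rotCurve γ ω) d s ∧
        ‖d‖ ^ 2 = 1 + ‖cross (∫ σ in (0:ℝ)..s, ω σ) (γd s)‖ ^ 2 ∧
        ‖d‖ ^ 2 ≤ 1 + (∫ σ in (0:ℝ)..s, ‖ω σ‖) ^ 2 :=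
  rotated_curve_derivative_norm_sq_general T γ γd hγac hγd hunit ω hω
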